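/- arXiv:1006.0205 — 2 statements merged into one kernel-verified Lean document; each statement's English description precedes it below -/
import Mathlib

section
/- For every integer s ≥ 1 and every 0 < δ ≤ 1 there exists a constant c > 0 with the following property. Let N ≥ 1 be an integer and let f : [N] → D satisfy ‖f‖_{U^{s+1}[N]} ≥ δ. Extend f by zero to all of ℤ, and for h ∈ ℤ define Δ_h f : [N] → ℂ by Δ_h f(n) := f(n+h)·conj(f(n)). Then the number of integers h with −N ≤ h ≤ N such that ‖Δ_h f‖_{U^s[N]} ≥ c is at least c·N. -/
open scoped BigOperators

noncomputable section

/-- The average `(1/|s|) Σ_{x ∈ s} f(x)` of a complex-valued function over a finite set. -/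
def cexp {α : Type*} (s : Finset α) (f : α → ℂ) : ℂ :=
  (∑ x ∈ s, f x) / (s.card : ℂ)

/-- The average `(1/|s|) Σ_{x ∈ s} f(x)` of a real-valued function over a finite set. -/
def rexp {α : Type*} (s : Finset α) (f : α → ℝ) : ℝ :=
  (∑ x ∈ s, f x) / (s.card : ℝ)

/-- The multiplicative derivative `Δ_h f(x) := f(x+h)·conj(f(x))`. -/
def mder {G : Type*} [Add G] (h : G) (f : G → ℂ) : G → ℂ :=
  fun x => f (x + h) * (starRingEnd ℂ) (f x)

/-- Iterated multiplicative derivative `Δ_{h₁} ⋯ Δ_{h_d} f`. -/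
def iterDeriv {G : Type*} [Add G] : (d : ℕ) → (Fin d → G) → (G → ℂ) → G → ℂ
  | 0, _, f => f
  | d + 1, h, f => iterDeriv d (fun i => h i.succ) (mder (h 0) f)

/-- The Gowers inner average `𝔼_{x,h₁,…,h_d ∈ G} Δ_{h₁}⋯Δ_{h_d} f(x)`. -/
def gowersAvg {G : Type*} [AddCommGroup G] [Fintype G] (d : ℕ) (f : G → ℂ) : ℂ :=
  cexp Finset.univ fun p : G × (Fin d → G) => iterDeriv d p.2 f p.1

/-- The Gowers norm `‖f‖_{U^d(G)} := (𝔼_{x,h₁,…,h_d} Δ_{h₁}⋯Δ_{h_d} f(x))^{1/2^d}`;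
the inner average is a nonnegative real, and we take its real part. -/
def gowersNorm {G : Type*} [AddCommGroup G] [Fintype G] (d : ℕ) (f : G → ℂ) : ℝ :=
  (gowersAvg d f).re ^ ((1 : ℝ) / 2 ^ d)

/-- The Gowers norm on `ZMod M`, extended by `0` to the degenerate case `M = 0`. -/
def gowersNormZMod (d M : ℕ) (f : ZMod M → ℂ) : ℝ :=
  if h : M = 0 then 0 else
    haveI : NeZero M := ⟨h⟩
    gowersNorm d f

/-- Extension of `f : ℤ → ℂ` to `ZMod M`, equal to `f` on (representatives of) `[N] = {1,…,N}`
and `0` elsewhere. -/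
def extendZ (M N : ℕ) (f : ℤ → ℂ) : ZMod M → ℂ :=
  fun x => if 1 ≤ x.val ∧ x.val ≤ N then f (x.val : ℤ) else 0

/-- The indicator function of `[N] = {1,…,N}` inside `ZMod M`. -/
def indicZ (M N : ℕ) : ZMod M → ℂ :=
  fun x => if 1 ≤ x.val ∧ x.val ≤ N then 1 else 0

/-- The Gowers norm `‖f‖_{U^d[N]}` of a function on `[N] = {1,…,N}`, defined with the
ambient cyclic group `ℤ/ÑℤZ`, `Ñ := 2^d N`, as
`‖f̃‖_{U^d(ℤ/Ñℤ)} / ‖1_{[N]}‖_{U^d(ℤ/Ñℤ)}`. -/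
def gowersNormInt (d N : ℕ) (f : ℤ → ℂ) : ℝ :=
  gowersNormZMod d (2 ^ d * N) (extendZ (2 ^ d * N) N f) /
    gowersNormZMod d (2 ^ d * N) (indicZ (2 ^ d * N) N)

/-- The standard character `e(t) := e^{2πit}`. -/
def eC (t : ℝ) : ℂ := Complex.exp (2 * Real.pi * Complex.I * t)

end


namespace MLD
noncomputable section
open Finset Function

/-! ### The cube product formula for `iterDeriv` -/

def wt {d : ℕ} (ε : Fin d → Bool) : ℕ := ∑ i, if ε i then 0 else 1

def vsum {G : Type*} [AddCommMonoid G] {d : ℕ} (ε : Fin d → Bool) (h : Fin d → G) : G :=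
  ∑ i, if ε i then h i else 0

lemma wt_cons {d : ℕ} (b : Bool) (ε : Fin d → Bool) :
    wt (Fin.cons b ε) = (if b then 0 else 1) + wt ε := by
  rw [wt, Fin.sum_univ_succ]
  simp only [Fin.cons_zero, Fin.cons_succ]
  rfl

lemma vsum_cons {G : Type*} [AddCommMonoid G] {d : ℕ} (b : Bool) (ε : Fin d → Bool)
    (h : Fin (d+1) → G) :
    vsum (Fin.cons b ε) h = (if b then h 0 else 0) + vsum ε (fun i => h i.succ) := by
  rw [vsum, Fin.sum_univ_succ]
  simp only [Fin.cons_zero, Fin.cons_succ]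
  rfl

lemma iterDeriv_eq_cube {G : Type*} [AddCommMonoid G] (d : ℕ) (h : Fin d → G) (f : G → ℂ)
    (x : G) :
    iterDeriv d h f x =
      ∏ ε : Fin d → Bool, (⇑(starRingEnd ℂ))^[wt ε] (f (x + vsum ε h)) := by
  induction d generalizing f x with
  | zero =>
      simp [iterDeriv, wt, vsum]
  | succ d ih =>
      show iterDeriv d (fun i => h i.succ) (mder (h 0) f) x = _
      rw [ih, ← Equiv.prod_comp (Fin.consEquiv fun _ : Fin (d+1) => Bool),
        Fintype.prod_prod_type]
      rw [Fintype.prod_bool]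
      have hce : ∀ (b : Bool) (ε : Fin d → Bool),
          (Fin.consEquiv fun _ : Fin (d+1) => Bool) (b, ε) = Fin.cons b ε := fun _ _ => rfl
      simp only [hce]
      rw [← Finset.prod_mul_distrib]
      refine Finset.prod_congr rfl fun ε _ => ?_
      rw [wt_cons, wt_cons, vsum_cons, vsum_cons]
      show (⇑(starRingEnd ℂ))^[wt ε]
          (f (x + vsum ε (fun i => h i.succ) + h 0) *
            (starRingEnd ℂ) (f (x + vsum ε fun i => h i.succ))) = _
      rw [iterate_map_mul, ← Function.iterate_succ_apply]
      simp only [Bool.false_eq_true, if_true, if_false, zero_add]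
      congr 2
      · rw [add_comm (h 0), ← add_assoc]
      · omega

lemma iter_ne_zero {n : ℕ} {z : ℂ} (h : (⇑(starRingEnd ℂ))^[n] z ≠ 0) : z ≠ 0 :=
  fun hz => h (by rw [hz]; exact iterate_map_zero _ n)

lemma abs_iterate (n : ℕ) (z : ℂ) :
    ‖(⇑(starRingEnd ℂ))^[n] z‖ = ‖z‖ := by
  induction n with
  | zero => rfl
  | succ k ih => rw [Function.iterate_succ_apply', Complex.norm_conj, ih]

/-! ### Basic facts about `gowersAvg` -/

variable {G : Type*} [AddCommGroup G] [Fintype G]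

lemma re_div_nat (z : ℂ) (n : ℕ) : (z / (n : ℂ)).re = z.re / n := by
  rw [show ((n : ℂ)) = ((n : ℝ) : ℂ) by push_cast; ring, Complex.div_ofReal_re]

lemma re_div_pow (z : ℂ) (n k : ℕ) : (z / ((n : ℂ)) ^ k).re = z.re / (n : ℝ) ^ k := by
  rw [show ((n : ℂ)) ^ k = (((n : ℝ) ^ k : ℝ) : ℂ) by push_cast; ring, Complex.div_ofReal_re]

lemma card_univ_pair (k : ℕ) :
    ((Finset.univ : Finset (G × (Fin k → G))).card : ℂ) = (Fintype.card G : ℂ) ^ (k + 1) := by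
  rw [Finset.card_univ, Fintype.card_prod, Fintype.card_fun, Fintype.card_fin]
  push_cast
  ring

lemma sum_iterDeriv_succ (d : ℕ) (f : G → ℂ) :
    ∑ p : G × (Fin (d+1) → G), iterDeriv (d+1) p.2 f p.1
      = ∑ h : G, ∑ p : G × (Fin d → G), iterDeriv d p.2 (mder h f) p.1 := by
  have key : ∀ x : G, ∑ H : Fin (d+1) → G, iterDeriv (d+1) H f x
      = ∑ q : G × (Fin d → G), iterDeriv d q.2 (mder q.1 f) x := by
    intro x
    rw [← Equiv.sum_comp (Fin.consEquiv fun _ : Fin (d+1) => G)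
      (fun H => iterDeriv (d+1) H f x)]
    refine Finset.sum_congr rfl fun q _ => ?_
    have h1 : (Fin.consEquiv fun _ : Fin (d+1) => G) q = Fin.cons (α := fun _ => G) q.1 q.2 := rfl
    rw [h1]
    show iterDeriv d (fun i => Fin.cons (α := fun _ => G) q.1 q.2 i.succ)
      (mder (Fin.cons (α := fun _ => G) q.1 q.2 0) f) x = _
    simp only [Fin.cons_succ, Fin.cons_zero]
  simp only [Fintype.sum_prod_type]
  calc ∑ x : G, ∑ H : Fin (d+1) → G, iterDeriv (d+1) H f x
      = ∑ x : G, ∑ h : G, ∑ t : Fin d → G, iterDeriv d t (mder h f) x := by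
        refine Finset.sum_congr rfl fun x _ => ?_
        rw [key x, Fintype.sum_prod_type]
    _ = ∑ h : G, ∑ x : G, ∑ t : Fin d → G, iterDeriv d t (mder h f) x := Finset.sum_comm

lemma gowersAvg_succ (d : ℕ) (f : G → ℂ) :
    gowersAvg (d+1) f = (∑ h : G, gowersAvg d (mder h f)) / (Fintype.card G : ℂ) := by
  unfold gowersAvg cexp
  rw [sum_iterDeriv_succ, card_univ_pair]
  simp only [card_univ_pair]
  rw [← Finset.sum_div, div_div, ← pow_succ]

lemma gowersAvg_one_re_nonneg (f : G → ℂ) : 0 ≤ (gowersAvg 1 f).re := by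
  have hsum : ∑ p : G × (Fin 1 → G), iterDeriv 1 p.2 f p.1
      = ((Complex.normSq (∑ x : G, f x) : ℝ) : ℂ) := by
    rw [Fintype.sum_prod_type]
    have key : ∀ x : G, ∑ H : Fin 1 → G, iterDeriv 1 H f x
        = (∑ z : G, f z) * (starRingEnd ℂ) (f x) := by
      intro x
      rw [← Equiv.sum_comp (Equiv.funUnique (Fin 1) G).symm
        (fun H : Fin 1 → G => iterDeriv 1 H f x)]
      have : ∀ y : G, iterDeriv 1 ((Equiv.funUnique (Fin 1) G).symm y) f x
          = f (x + y) * (starRingEnd ℂ) (f x) := fun y => rfl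
      simp only [this]
      rw [← Finset.sum_mul]
      congr 1
      exact Equiv.sum_comp (Equiv.addLeft x) f
    simp only [key]
    rw [← Finset.mul_sum, ← map_sum, Complex.mul_conj]
  unfold gowersAvg cexp
  rw [hsum, re_div_nat, Complex.ofReal_re]
  exact div_nonneg (Complex.normSq_nonneg _) (Nat.cast_nonneg _)

lemma gowersAvg_re_nonneg (d : ℕ) (hd : 1 ≤ d) (f : G → ℂ) : 0 ≤ (gowersAvg d f).re := by
  induction d generalizing f with
  | zero => omega
  | succ k ih =>
      rcases Nat.eq_or_lt_of_le hd with h1 | h1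
      · rw [← h1] at *
        exact gowersAvg_one_re_nonneg f
      · have hk : 1 ≤ k := by omega
        rw [gowersAvg_succ, re_div_nat, Complex.re_sum]
        have : 0 ≤ ∑ h : G, (gowersAvg k (mder h f)).re :=
          Finset.sum_nonneg fun h _ => ih hk (mder h f)
        positivity

lemma iterDeriv_zero_fn {G' : Type*} [AddCommMonoid G'] (d : ℕ) (h : Fin d → G') (x : G') :
    iterDeriv d h (fun _ => (0:ℂ)) x = 0 := by
  rw [iterDeriv_eq_cube]
  exact Finset.prod_eq_zero (Finset.mem_univ (fun _ => false)) (iterate_map_zero _ _)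

lemma gowersAvg_zero (d : ℕ) : gowersAvg d (fun _ => (0:ℂ) : G → ℂ) = 0 := by
  unfold gowersAvg cexp
  simp only [iterDeriv_zero_fn, Finset.sum_const_zero, zero_div]

/-! ### Transfer between `ZMod K` and `ℤ` -/

lemma val_intCast {K : ℕ} [NeZero K] {v : ℤ} (h0 : 0 ≤ v) (h1 : v < K) :
    (((v : ZMod K)).val : ℤ) = v := by
  obtain ⟨n, rfl⟩ := Int.eq_ofNat_of_zero_le h0
  have hn : n < K := by exact_mod_cast h1
  rw [Int.cast_natCast, ZMod.val_cast_of_lt hn]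

lemma intCast_val_eq {K : ℕ} [NeZero K] (x : ZMod K) : ((x.val : ℤ) : ZMod K) = x := by
  rw [Int.cast_natCast, ZMod.natCast_val, ZMod.cast_id]

lemma eq_of_castZMod_eq {K : ℕ} {a b : ℤ} (h : (a : ZMod K) = b) (hlt : |a - b| < K) :
    a = b := by
  have hz : ((a - b : ℤ) : ZMod K) = 0 := by push_cast; rw [h, sub_self]
  have hd : (K : ℤ) ∣ a - b := (ZMod.intCast_zmod_eq_zero_iff_dvd _ K).mp hz
  have := Int.eq_zero_of_abs_lt_dvd hd hlt
  omega

lemma vsum_bound' {d : ℕ} {lo hi : ℤ} (hlo : lo ≤ 0) (hhi : 0 ≤ hi) {ε : Fin d → Bool}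
    {h : Fin d → ℤ} (hh : ∀ j, h j ∈ Icc lo hi) :
    (d : ℤ) * lo ≤ vsum ε h ∧ vsum ε h ≤ (d : ℤ) * hi := by
  constructor
  · calc (d:ℤ) * lo = ∑ _i : Fin d, lo := by
          rw [Finset.sum_const, Finset.card_univ, Fintype.card_fin]; ring
    _ ≤ vsum ε h := by
          refine Finset.sum_le_sum fun i _ => ?_
          have := Finset.mem_Icc.mp (hh i)
          by_cases hb : ε i <;> simp [hb] <;> omega
  · calc vsum ε h ≤ ∑ _i : Fin d, hi := by
          refine Finset.sum_le_sum fun i _ => ?_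
          have := Finset.mem_Icc.mp (hh i)
          by_cases hb : ε i <;> simp [hb] <;> omega
    _ = (d:ℤ) * hi := by
          rw [Finset.sum_const, Finset.card_univ, Fintype.card_fin]; ring

lemma vsum_bound {d N : ℕ} {ε : Fin d → Bool} {h : Fin d → ℤ} (hN : 1 ≤ N)
    (hh : ∀ j, h j ∈ Icc (1-(N:ℤ)) ((N:ℤ)-1)) :
    (d : ℤ) * (1 - N) ≤ vsum ε h ∧ vsum ε h ≤ (d : ℤ) * (N - 1) := by
  have hN' : (1:ℤ) ≤ (N:ℤ) := by exact_mod_cast hN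
  exact vsum_bound' (by omega) (by omega) hh

lemma vsum_cast {K : ℕ} {d : ℕ} (ε : Fin d → Bool) (h : Fin d → ℤ) :
    vsum ε (fun j => ((h j : ZMod K))) = ((vsum ε h : ℤ) : ZMod K) := by
  unfold vsum
  rw [Int.cast_sum]
  refine Finset.sum_congr rfl fun i _ => ?_
  by_cases hb : ε i <;> simp [hb]

lemma extendZ_intCast {K N : ℕ} [NeZero K] (g : ℤ → ℂ)
    (hg : ∀ n : ℤ, n ∉ Icc (1:ℤ) (N:ℤ) → g n = 0)
    {v : ℤ} (h1 : (N:ℤ) - K < v) (h2 : v < K) :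
    extendZ K N g ((v : ZMod K)) = g v := by
  unfold extendZ
  by_cases hv : 1 ≤ v ∧ v ≤ (N:ℤ)
  · have hval : (((v : ZMod K)).val : ℤ) = v := val_intCast (by omega) h2
    rw [if_pos, hval]
    constructor
    · have h' : (1:ℤ) ≤ (((v : ZMod K)).val : ℤ) := by rw [hval]; exact hv.1
      exact_mod_cast h'
    · have h' : (((v : ZMod K)).val : ℤ) ≤ (N:ℤ) := by rw [hval]; exact hv.2
      exact_mod_cast h'
  · rw [hg v (by rw [Finset.mem_Icc]; omega)]
    by_cases hc : 1 ≤ ((v : ZMod K) : ZMod K).val ∧ ((v : ZMod K)).val ≤ N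
    · exfalso
      set m : ℤ := (((v : ZMod K)).val : ℤ) with hm
      have hmc : ((m : ZMod K)) = (v : ZMod K) := intCast_val_eq _
      have hm1 : 1 ≤ m := by rw [hm]; exact_mod_cast hc.1
      have hm2 : m ≤ (N:ℤ) := by rw [hm]; exact_mod_cast hc.2
      have : m = v := eq_of_castZMod_eq hmc (by rw [abs_lt]; omega)
      omega
    · rw [if_neg hc]

def box (d N : ℕ) : Finset (ℤ × (Fin d → ℤ)) :=
  (Icc (1:ℤ) (N:ℤ)) ×ˢ (Fintype.piFinset fun _ : Fin d => Icc (1-(N:ℤ)) ((N:ℤ)-1))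

def Tsum (d N : ℕ) (g : ℤ → ℂ) : ℂ := ∑ p ∈ box d N, iterDeriv d p.2 g p.1

lemma vsum_false {G' : Type*} [AddCommMonoid G'] {d : ℕ} (h : Fin d → G') :
    vsum (fun _ => false) h = 0 := by simp [vsum]

lemma vsum_single {G' : Type*} [AddCommMonoid G'] {d : ℕ} (j : Fin d) (h : Fin d → G') :
    vsum (fun i => decide (i = j)) h = h j := by simp [vsum]

lemma mem_of_ne_zero {d N K : ℕ} [NeZero K] {g : ℤ → ℂ}
    {p : ZMod K × (Fin d → ZMod K)}
    (hne : iterDeriv d p.2 (extendZ K N g) p.1 ≠ 0) :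
    (1 ≤ p.1.val ∧ p.1.val ≤ N) ∧
      ∀ j, 1 ≤ (p.1 + p.2 j).val ∧ (p.1 + p.2 j).val ≤ N := by
  rw [iterDeriv_eq_cube] at hne
  have hfac := Finset.prod_ne_zero_iff.mp hne
  constructor
  · have h0 := iter_ne_zero (hfac (fun _ => false) (Finset.mem_univ _))
    rw [vsum_false, add_zero] at h0
    unfold extendZ at h0
    by_contra hc
    exact h0 (if_neg hc)
  · intro j
    have h0 := iter_ne_zero (hfac (fun i => decide (i = j)) (Finset.mem_univ _))
    rw [vsum_single] at h0
    unfold extendZ at h0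
    by_contra hc
    exact h0 (if_neg hc)

lemma int_mem_of_ne_zero {d N : ℕ} {g : ℤ → ℂ}
    (hg : ∀ n : ℤ, n ∉ Icc (1:ℤ) (N:ℤ) → g n = 0) {x : ℤ} {h : Fin d → ℤ}
    (hne : iterDeriv d h g x ≠ 0) :
    ∀ j, 1 ≤ x + h j ∧ x + h j ≤ (N:ℤ) := by
  rw [iterDeriv_eq_cube] at hne
  have hfac := Finset.prod_ne_zero_iff.mp hne
  intro j
  have h0 := iter_ne_zero (hfac (fun i => decide (i = j)) (Finset.mem_univ _))
  rw [vsum_single] at h0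
  by_contra hc
  exact h0 (hg _ (by rw [Finset.mem_Icc]; omega))

lemma term_eq {d N K : ℕ} [NeZero K] (hd : 1 ≤ d) (hN : 1 ≤ N) (hK : (d+1)*N ≤ K)
    (g : ℤ → ℂ) (hg : ∀ n : ℤ, n ∉ Icc (1:ℤ) (N:ℤ) → g n = 0)
    {x : ℤ} {h : Fin d → ℤ} (hx : x ∈ Icc (1:ℤ) (N:ℤ))
    (hh : ∀ j, h j ∈ Icc (1-(N:ℤ)) ((N:ℤ)-1)) :
    iterDeriv d (fun j => ((h j : ZMod K))) (extendZ K N g) ((x : ZMod K))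
      = iterDeriv d h g x := by
  rw [iterDeriv_eq_cube, iterDeriv_eq_cube]
  refine Finset.prod_congr rfl fun ε _ => ?_
  congr 1
  have hv : (x : ZMod K) + vsum ε (fun j => ((h j : ZMod K)))
      = ((x + vsum ε h : ℤ) : ZMod K) := by
    rw [vsum_cast]; push_cast; ring
  rw [hv]
  have hb := vsum_bound (ε := ε) hN hh
  have hxm := Finset.mem_Icc.mp hx
  have hKi : ((d:ℤ)+1)*(N:ℤ) ≤ (K:ℤ) := by exact_mod_cast hK
  have hNK : (N:ℤ) - K < x + vsum ε h := by nlinarith [hb.1, hb.2]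
  have hvK : x + vsum ε h < (K:ℤ) := by
    have hd1 : (1:ℤ) ≤ (d:ℤ) := by exact_mod_cast hd
    nlinarith [hb.1, hb.2]
  exact extendZ_intCast g hg hNK hvK

lemma sum_zmod_eq_Tsum (d N K : ℕ) (hd : 1 ≤ d) (hN : 1 ≤ N) (hK : (d+1)*N ≤ K) [NeZero K]
    (g : ℤ → ℂ) (hg : ∀ n : ℤ, n ∉ Icc (1:ℤ) (N:ℤ) → g n = 0) :
    ∑ p : ZMod K × (Fin d → ZMod K), iterDeriv d p.2 (extendZ K N g) p.1 = Tsum d N g := by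
  have hNK : (N:ℤ) < (K:ℤ) := by
    have : ((d:ℤ)+1)*(N:ℤ) ≤ (K:ℤ) := by exact_mod_cast hK
    have hd1 : (1:ℤ) ≤ (d:ℤ) := by exact_mod_cast hd
    have hN1 : (1:ℤ) ≤ (N:ℤ) := by exact_mod_cast hN
    nlinarith
  refine Finset.sum_bij_ne_zero
    (fun p _ hne => (((p.1.val : ℤ)), fun j => (((p.1 + p.2 j).val : ℤ) - (p.1.val : ℤ))))
    ?_ ?_ ?_ ?_
  · -- maps into box
    intro p _ hne
    obtain ⟨⟨hx1, hx2⟩, hj⟩ := mem_of_ne_zero (N := N) hne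
    rw [box, Finset.mem_product]
    constructor
    · rw [Finset.mem_Icc]
      refine ⟨?_, ?_⟩
      · show (1:ℤ) ≤ (p.1.val : ℤ)
        exact_mod_cast hx1
      · show (p.1.val : ℤ) ≤ (N:ℤ)
        exact_mod_cast hx2
    · rw [Fintype.mem_piFinset]
      intro j
      obtain ⟨hj1, hj2⟩ := hj j
      rw [Finset.mem_Icc]
      have e1 : (1:ℤ) ≤ ((p.1 + p.2 j).val : ℤ) := by exact_mod_cast hj1
      have e2 : ((p.1 + p.2 j).val : ℤ) ≤ (N:ℤ) := by exact_mod_cast hj2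
      have e3 : (1:ℤ) ≤ (p.1.val : ℤ) := by exact_mod_cast hx1
      have e4 : (p.1.val : ℤ) ≤ (N:ℤ) := by exact_mod_cast hx2
      refine ⟨?_, ?_⟩
      · show 1 - (N:ℤ) ≤ ((p.1 + p.2 j).val : ℤ) - (p.1.val : ℤ)
        omega
      · show ((p.1 + p.2 j).val : ℤ) - (p.1.val : ℤ) ≤ (N:ℤ) - 1
        omega
  · -- injective
    intro a1 h11 h12 a2 h21 h22 heq
    rw [Prod.mk.injEq] at heq
    obtain ⟨he1, he2⟩ := heq
    have hv1 : a1.1.val = a2.1.val := by exact_mod_cast he1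
    have h1 : a1.1 = a2.1 := ZMod.val_injective K hv1
    have h2 : a1.2 = a2.2 := by
      funext j
      have := congrFun he2 j
      have hval : (a1.1 + a1.2 j).val = (a2.1 + a2.2 j).val := by
        rw [h1] at this ⊢
        have : ((a2.1 + a1.2 j).val : ℤ) = ((a2.1 + a2.2 j).val : ℤ) := by omega
        exact_mod_cast this
      have := ZMod.val_injective K hval
      rw [h1] at this
      exact add_left_cancel this
    exact Prod.ext h1 h2
  · -- surjective
    intro b hb hgne
    rw [box, Finset.mem_product] at hb
    obtain ⟨hbx, hbh⟩ := hb
    rw [Fintype.mem_piFinset] at hbh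
    have hbx' := Finset.mem_Icc.mp hbx
    have hmem := int_mem_of_ne_zero hg hgne
    refine ⟨((b.1 : ZMod K), fun j => ((b.2 j : ZMod K))), Finset.mem_univ _, ?_, ?_⟩
    · rw [term_eq hd hN hK g hg hbx hbh]
      exact hgne
    · have hxval : (((b.1 : ZMod K)).val : ℤ) = b.1 := val_intCast (by omega) (by omega)
      have h2 : (fun j => ((((b.1 : ZMod K) + (b.2 j : ZMod K)).val : ℤ)
          - (((b.1 : ZMod K)).val : ℤ))) = b.2 := by
        funext j
        have hjm := hmem j
        have hjh := Finset.mem_Icc.mp (hbh j)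
        have hcast : (b.1 : ZMod K) + (b.2 j : ZMod K) = ((b.1 + b.2 j : ℤ) : ZMod K) := by
          push_cast; ring
        rw [hcast, val_intCast (by omega) (by omega), hxval]
        ring
      exact Prod.ext hxval h2
  · -- values equal
    intro a ha hne
    obtain ⟨⟨hx1, hx2⟩, hj⟩ := mem_of_ne_zero (N := N) hne
    set x : ℤ := (a.1.val : ℤ) with hxdef
    set h : Fin d → ℤ := fun j => ((a.1 + a.2 j).val : ℤ) - x with hhdef
    have hx : x ∈ Icc (1:ℤ) (N:ℤ) := by
      rw [Finset.mem_Icc, hxdef]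
      constructor <;> [exact_mod_cast hx1; exact_mod_cast hx2]
    have hxm := Finset.mem_Icc.mp hx
    have hh : ∀ j, h j ∈ Icc (1-(N:ℤ)) ((N:ℤ)-1) := by
      intro j
      obtain ⟨hj1, hj2⟩ := hj j
      have e1 : (1:ℤ) ≤ ((a.1 + a.2 j).val : ℤ) := by exact_mod_cast hj1
      have e2 : ((a.1 + a.2 j).val : ℤ) ≤ (N:ℤ) := by exact_mod_cast hj2
      rw [Finset.mem_Icc, hhdef]
      constructor <;> simp only [] <;> omega
    have ha1 : ((x : ℤ) : ZMod K) = a.1 := intCast_val_eq a.1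
    have hfun : a.2 = fun j => ((h j : ℤ) : ZMod K) := by
      funext j
      rw [hhdef]
      push_cast
      rw [ZMod.natCast_val, ZMod.cast_id, ha1]
      ring
    conv_lhs => rw [← ha1, hfun]
    exact term_eq hd hN hK g hg hx hh

/-- The real-valued "number of combinatorial cubes" count. -/
def cubeInd (d N : ℕ) (p : ℤ × (Fin d → ℤ)) : ℝ :=
  ∏ ε : Fin d → Bool, (if 1 ≤ p.1 + vsum ε p.2 ∧ p.1 + vsum ε p.2 ≤ (N:ℤ) then 1 else 0)

def Rcnt (d N : ℕ) : ℝ := ∑ p ∈ box d N, cubeInd d N p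

def indInt (N : ℕ) : ℤ → ℂ := fun n => if 1 ≤ n ∧ n ≤ (N:ℤ) then 1 else 0

lemma indInt_support (N : ℕ) : ∀ n : ℤ, n ∉ Icc (1:ℤ) (N:ℤ) → indInt N n = 0 := by
  intro n hn
  rw [Finset.mem_Icc] at hn
  exact if_neg hn

lemma extendZ_indInt (K N : ℕ) : extendZ K N (indInt N) = indicZ K N := by
  funext x
  unfold extendZ indicZ indInt
  by_cases hx : 1 ≤ x.val ∧ x.val ≤ N
  · rw [if_pos hx, if_pos hx, if_pos]
    exact ⟨by exact_mod_cast hx.1, by exact_mod_cast hx.2⟩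
  · rw [if_neg hx, if_neg hx]

lemma Tsum_indInt (d N : ℕ) : Tsum d N (indInt N) = ((Rcnt d N : ℝ) : ℂ) := by
  unfold Tsum Rcnt
  rw [Complex.ofReal_sum]
  refine Finset.sum_congr rfl fun p _ => ?_
  rw [iterDeriv_eq_cube, cubeInd, Complex.ofReal_prod]
  refine Finset.prod_congr rfl fun ε _ => ?_
  unfold indInt
  by_cases hv : 1 ≤ p.1 + vsum ε p.2 ∧ p.1 + vsum ε p.2 ≤ (N:ℤ)
  · rw [if_pos hv, if_pos hv, iterate_map_one]
    norm_num
  · rw [if_neg hv, if_neg hv, iterate_map_zero]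
    norm_num

lemma cubeInd_nonneg (d N : ℕ) (p : ℤ × (Fin d → ℤ)) : 0 ≤ cubeInd d N p := by
  refine Finset.prod_nonneg fun ε _ => ?_
  split <;> norm_num

lemma cubeInd_le_one (d N : ℕ) (p : ℤ × (Fin d → ℤ)) : cubeInd d N p ≤ 1 := by
  refine Finset.prod_le_one (fun ε _ => ?_) (fun ε _ => ?_) <;> split <;> norm_num

lemma card_box (d N : ℕ) (hN : 1 ≤ N) : (box d N).card = N * (2*N-1)^d := by
  rw [box, Finset.card_product, Fintype.card_piFinset]
  have h1 : (Icc (1:ℤ) (N:ℤ)).card = N := by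
    rw [Int.card_Icc]
    omega
  have h2 : (Icc (1-(N:ℤ)) ((N:ℤ)-1)).card = 2*N-1 := by
    rw [Int.card_Icc]
    omega
  rw [h1]
  rw [Finset.prod_congr rfl fun (i : Fin d) _ => h2, Finset.prod_const, Finset.card_univ,
    Fintype.card_fin]

lemma Rcnt_nonneg (d N : ℕ) : 0 ≤ Rcnt d N :=
  Finset.sum_nonneg fun p _ => cubeInd_nonneg d N p

lemma Rcnt_le (d N : ℕ) (hN : 1 ≤ N) : Rcnt d N ≤ (N:ℝ) * (2*N)^d := by
  calc Rcnt d N ≤ ∑ _p ∈ box d N, (1:ℝ) :=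
        Finset.sum_le_sum fun p _ => cubeInd_le_one d N p
    _ = ((box d N).card : ℝ) := by rw [Finset.sum_const]; simp
    _ = ((N * (2*N-1)^d : ℕ) : ℝ) := by rw [card_box d N hN]
    _ ≤ ((N * (2*N)^d : ℕ) : ℝ) := by
        exact_mod_cast Nat.mul_le_mul_left _ (Nat.pow_le_pow_left (by omega) d)
    _ = (N:ℝ) * (2*N)^d := by push_cast; ring

lemma Rcnt_ge_one (d N : ℕ) (hN : 1 ≤ N) : 1 ≤ Rcnt d N := by
  have hmem : ((1:ℤ), (fun _ => 0 : Fin d → ℤ)) ∈ box d N := by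
    rw [box]
    refine Finset.mem_product.mpr ⟨?_, ?_⟩
    · show (1:ℤ) ∈ Icc (1:ℤ) (N:ℤ)
      rw [Finset.mem_Icc]
      omega
    · show (fun _ => 0 : Fin d → ℤ) ∈ _
      refine Fintype.mem_piFinset.mpr fun j => ?_
      rw [Finset.mem_Icc]
      omega
  have hval : cubeInd d N ((1:ℤ), (fun _ => 0 : Fin d → ℤ)) = 1 := by
    unfold cubeInd
    refine Finset.prod_eq_one fun ε _ => ?_
    have hv : vsum ε (fun _ => (0:ℤ) : Fin d → ℤ) = 0 := by simp [vsum]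
    simp only [hv]
    rw [if_pos]
    show 1 ≤ (1:ℤ) + 0 ∧ (1:ℤ) + 0 ≤ (N:ℤ)
    omega
  calc (1:ℝ) = cubeInd d N ((1:ℤ), (fun _ => 0 : Fin d → ℤ)) := hval.symm
    _ ≤ Rcnt d N := Finset.single_le_sum (fun p _ => cubeInd_nonneg d N p) hmem

lemma Rcnt_lower (d N : ℕ) (hN : 1 ≤ N) :
    ((N / (d+1) : ℕ) : ℝ) ^ (d+1) ≤ Rcnt d N := by
  set q : ℕ := N / (d+1) with hq
  rcases Nat.eq_zero_or_pos q with hq0 | hq1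
  · rw [hq0]
    simpa using Rcnt_nonneg d N
  · have hqN : (d+1) * q ≤ N := by
      rw [hq, mul_comm]
      exact Nat.div_mul_le_self N (d+1)
    have hqle : (q:ℤ) ≤ (N:ℤ) := by exact_mod_cast Nat.div_le_self N (d+1)
    have hq1' : (1:ℤ) ≤ (q:ℤ) := by exact_mod_cast hq1
    have hN' : (1:ℤ) ≤ (N:ℤ) := by exact_mod_cast hN
    set sub : Finset (ℤ × (Fin d → ℤ)) :=
      (Icc (1:ℤ) (q:ℤ)) ×ˢ (Fintype.piFinset fun _ : Fin d => Icc (0:ℤ) ((q:ℤ)-1)) with hsub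
    have hsubset : sub ⊆ box d N := by
      intro p hp
      rw [hsub, Finset.mem_product] at hp
      obtain ⟨hp1, hp2⟩ := hp
      rw [Fintype.mem_piFinset] at hp2
      rw [box]
      refine Finset.mem_product.mpr ⟨?_, ?_⟩
      · rw [Finset.mem_Icc] at hp1 ⊢
        omega
      · refine Fintype.mem_piFinset.mpr fun j => ?_
        have := Finset.mem_Icc.mp (hp2 j)
        rw [Finset.mem_Icc]
        omega
    have hone : ∀ p ∈ sub, cubeInd d N p = 1 := by
      intro p hp
      rw [hsub, Finset.mem_product] at hp
      obtain ⟨hp1, hp2⟩ := hp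
      rw [Fintype.mem_piFinset] at hp2
      have hx := Finset.mem_Icc.mp hp1
      unfold cubeInd
      refine Finset.prod_eq_one fun ε _ => ?_
      have hb := vsum_bound' (le_refl (0:ℤ)) (by omega : (0:ℤ) ≤ (q:ℤ)-1)
        (fun j => hp2 j) (ε := ε)
      rw [if_pos]
      have hqNi : ((d:ℤ)+1) * (q:ℤ) ≤ (N:ℤ) := by exact_mod_cast hqN
      constructor
      · have := hb.1
        nlinarith
      · have := hb.2
        nlinarith
    have hcard : (sub.card : ℝ) = ((q:ℝ)) ^ (d+1) := by
      rw [hsub, Finset.card_product, Fintype.card_piFinset]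
      have h1 : (Icc (1:ℤ) (q:ℤ)).card = q := by rw [Int.card_Icc]; omega
      have h2 : (Icc (0:ℤ) ((q:ℤ)-1)).card = q := by rw [Int.card_Icc]; omega
      rw [h1, Finset.prod_congr rfl fun (i : Fin d) _ => h2, Finset.prod_const,
        Finset.card_univ, Fintype.card_fin]
      push_cast
      ring
    calc ((q:ℕ):ℝ)^(d+1) = ∑ p ∈ sub, cubeInd d N p := by
          rw [Finset.sum_congr rfl hone, Finset.sum_const, nsmul_eq_mul, mul_one, hcard]
      _ ≤ Rcnt d N :=
          Finset.sum_le_sum_of_subset_of_nonneg hsubset fun p _ _ => cubeInd_nonneg d N p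

/-! ### Norm formulas -/

lemma abs_Tsum_le (d N : ℕ) (g : ℤ → ℂ)
    (hb : ∀ n : ℤ, ‖g n‖ ≤ (if 1 ≤ n ∧ n ≤ (N:ℤ) then 1 else 0)) :
    ‖Tsum d N g‖ ≤ Rcnt d N := by
  refine le_trans (norm_sum_le _ _) (Finset.sum_le_sum fun p _ => ?_)
  rw [iterDeriv_eq_cube, norm_prod]
  unfold cubeInd
  refine Finset.prod_le_prod (fun ε _ => norm_nonneg _) (fun ε _ => ?_)
  rw [abs_iterate]
  exact hb _

lemma gowersAvg_extend (d N K : ℕ) (hd : 1 ≤ d) (hN : 1 ≤ N) (hK : (d+1)*N ≤ K) [NeZero K]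
    (g : ℤ → ℂ) (hg : ∀ n : ℤ, n ∉ Icc (1:ℤ) (N:ℤ) → g n = 0) :
    gowersAvg d (extendZ K N g) = Tsum d N g / ((K:ℂ)) ^ (d+1) := by
  rw [gowersAvg, cexp, sum_zmod_eq_Tsum d N K hd hN hK g hg, card_univ_pair, ZMod.card]

lemma gowersAvg_extend_re (d N K : ℕ) (hd : 1 ≤ d) (hN : 1 ≤ N) (hK : (d+1)*N ≤ K) [NeZero K]
    (g : ℤ → ℂ) (hg : ∀ n : ℤ, n ∉ Icc (1:ℤ) (N:ℤ) → g n = 0) :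
    (gowersAvg d (extendZ K N g)).re = (Tsum d N g).re / (K:ℝ) ^ (d+1) := by
  rw [gowersAvg_extend d N K hd hN hK g hg, re_div_pow]

lemma Tsum_re_nonneg (d N K : ℕ) (hd : 1 ≤ d) (hN : 1 ≤ N) (hK : (d+1)*N ≤ K) [NeZero K]
    (g : ℤ → ℂ) (hg : ∀ n : ℤ, n ∉ Icc (1:ℤ) (N:ℤ) → g n = 0) :
    0 ≤ (Tsum d N g).re := by
  have h1 := gowersAvg_re_nonneg d hd (extendZ K N g)
  rw [gowersAvg_extend_re d N K hd hN hK g hg] at h1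
  have hKpos : (0:ℝ) < (K:ℝ) ^ (d+1) := by
    have : 0 < K := Nat.pos_of_ne_zero (NeZero.ne K)
    positivity
  rw [le_div_iff₀ hKpos, zero_mul] at h1
  exact h1

lemma gowersNormZMod_extend (d N K : ℕ) (hd : 1 ≤ d) (hN : 1 ≤ N) (hK : (d+1)*N ≤ K)
    (hK0 : K ≠ 0) (g : ℤ → ℂ) (hg : ∀ n : ℤ, n ∉ Icc (1:ℤ) (N:ℤ) → g n = 0) :
    gowersNormZMod d K (extendZ K N g)
      = ((Tsum d N g).re / (K:ℝ) ^ (d+1)) ^ ((1:ℝ)/2^d) := by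
  haveI : NeZero K := ⟨hK0⟩
  rw [gowersNormZMod, dif_neg hK0, gowersNorm, gowersAvg_extend_re d N K hd hN hK g hg]

lemma gowersNormZMod_indic (d N K : ℕ) (hd : 1 ≤ d) (hN : 1 ≤ N) (hK : (d+1)*N ≤ K)
    (hK0 : K ≠ 0) :
    gowersNormZMod d K (indicZ K N) = (Rcnt d N / (K:ℝ) ^ (d+1)) ^ ((1:ℝ)/2^d) := by
  rw [← extendZ_indInt K N,
    gowersNormZMod_extend d N K hd hN hK hK0 (indInt N) (indInt_support N), Tsum_indInt,
    Complex.ofReal_re]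

/-! ### Multiplicative derivatives of extensions -/

lemma mder_extendZ (Nt N : ℕ) [NeZero Nt] (hNt : 2*N ≤ Nt) (f : ℤ → ℂ)
    (hf : ∀ n : ℤ, n ∉ Icc (1:ℤ) (N:ℤ) → f n = 0) (t : ℤ)
    (ht : t ∈ Icc (1-(N:ℤ)) ((N:ℤ)-1)) :
    mder ((t : ZMod Nt)) (extendZ Nt N f)
      = extendZ Nt N (fun n => f (n + t) * (starRingEnd ℂ) (f n)) := by
  funext x
  obtain ⟨ht1, ht2⟩ := Finset.mem_Icc.mp ht
  have hNt' : (2*N : ℤ) ≤ (Nt:ℤ) := by exact_mod_cast hNt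
  show extendZ Nt N f (x + t) * (starRingEnd ℂ) (extendZ Nt N f x) = _
  by_cases hx : 1 ≤ x.val ∧ x.val ≤ N
  · have hx1 : (1:ℤ) ≤ (x.val:ℤ) := by exact_mod_cast hx.1
    have hx2 : ((x.val:ℤ)) ≤ (N:ℤ) := by exact_mod_cast hx.2
    have hxt : (((x.val:ℤ) + t : ℤ) : ZMod Nt) = x + (t : ZMod Nt) := by
      rw [Int.cast_add, intCast_val_eq]
    rw [← hxt, extendZ_intCast f hf (by omega) (by omega)]
    unfold extendZ
    rw [if_pos hx, if_pos hx]
  · unfold extendZ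
    rw [if_neg hx, if_neg hx]
    simp

lemma mder_extendZ_zero (Nt N : ℕ) [NeZero Nt] (f : ℤ → ℂ) (h : ZMod Nt)
    (hh : ∀ t : ℤ, t ∈ Icc (1-(N:ℤ)) ((N:ℤ)-1) → (t : ZMod Nt) ≠ h) :
    mder h (extendZ Nt N f) = (fun _ => (0:ℂ)) := by
  funext x
  show extendZ Nt N f (x + h) * (starRingEnd ℂ) (extendZ Nt N f x) = 0
  by_cases hx : 1 ≤ x.val ∧ x.val ≤ N
  · by_cases hy : 1 ≤ (x+h).val ∧ (x+h).val ≤ N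
    · exfalso
      set t : ℤ := (((x+h).val : ℤ)) - ((x.val : ℤ)) with htd
      have hx1 : (1:ℤ) ≤ (x.val:ℤ) := by exact_mod_cast hx.1
      have hx2 : ((x.val:ℤ)) ≤ (N:ℤ) := by exact_mod_cast hx.2
      have hy1 : (1:ℤ) ≤ ((x+h).val:ℤ) := by exact_mod_cast hy.1
      have hy2 : (((x+h).val:ℤ)) ≤ (N:ℤ) := by exact_mod_cast hy.2
      refine hh t (Finset.mem_Icc.mpr ⟨by omega, by omega⟩) ?_
      rw [htd, Int.cast_sub, intCast_val_eq, intCast_val_eq]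
      ring
    · unfold extendZ
      rw [if_neg hy]
      simp
  · unfold extendZ
    rw [if_neg hx]
    simp

/-! ### The key decomposition of the `U^{s+1}` average -/

lemma avg_decomp (s N : ℕ) (hs : 1 ≤ s) (hN : 1 ≤ N) (Nt : ℕ) [NeZero Nt]
    (hKN : (s+1)*N ≤ Nt) (h2N : 2*N ≤ Nt)
    (f : ℤ → ℂ) (hf : ∀ n : ℤ, n ∉ Icc (1:ℤ) (N:ℤ) → f n = 0) :
    (gowersAvg (s+1) (extendZ Nt N f)).re
      = (∑ t ∈ Icc (1-(N:ℤ)) ((N:ℤ)-1),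
          (Tsum s N (fun n => f (n+t) * (starRingEnd ℂ) (f n))).re) / (Nt:ℝ)^(s+2) := by
  have hNt' : (2*N : ℤ) ≤ (Nt:ℤ) := by exact_mod_cast h2N
  have hN' : (1:ℤ) ≤ (N:ℤ) := by exact_mod_cast hN
  have hgsupp : ∀ t : ℤ, ∀ n : ℤ, n ∉ Icc (1:ℤ) (N:ℤ) →
      (fun n => f (n+t) * (starRingEnd ℂ) (f n)) n = 0 := by
    intro t n hn
    simp only
    rw [hf n hn, map_zero, mul_zero]
  rw [gowersAvg_succ s (extendZ Nt N f)]
  have hinj : ∀ t1 ∈ Icc (1-(N:ℤ)) ((N:ℤ)-1), ∀ t2 ∈ Icc (1-(N:ℤ)) ((N:ℤ)-1),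
      ((t1 : ZMod Nt)) = ((t2 : ZMod Nt)) → t1 = t2 := by
    intro t1 h1 t2 h2 hc
    obtain ⟨h11, h12⟩ := Finset.mem_Icc.mp h1
    obtain ⟨h21, h22⟩ := Finset.mem_Icc.mp h2
    exact eq_of_castZMod_eq hc (by rw [abs_lt]; omega)
  have himg : ∑ h : ZMod Nt, gowersAvg s (mder h (extendZ Nt N f))
      = ∑ t ∈ Icc (1-(N:ℤ)) ((N:ℤ)-1),
          Tsum s N (fun n => f (n+t) * (starRingEnd ℂ) (f n)) / ((Nt:ℂ))^(s+1) := by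
    calc ∑ h : ZMod Nt, gowersAvg s (mder h (extendZ Nt N f))
        = ∑ h ∈ (Icc (1-(N:ℤ)) ((N:ℤ)-1)).image (fun t : ℤ => (t : ZMod Nt)),
            gowersAvg s (mder h (extendZ Nt N f)) := by
          refine (Finset.sum_subset (Finset.subset_univ _) ?_).symm
          intro h _ hnm
          rw [mder_extendZ_zero Nt N f h ?_, gowersAvg_zero]
          intro t ht hcast
          exact hnm (Finset.mem_image.mpr ⟨t, ht, hcast⟩)
      _ = ∑ t ∈ Icc (1-(N:ℤ)) ((N:ℤ)-1),
            gowersAvg s (mder ((t : ZMod Nt)) (extendZ Nt N f)) := Finset.sum_image hinj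
      _ = ∑ t ∈ Icc (1-(N:ℤ)) ((N:ℤ)-1),
            Tsum s N (fun n => f (n+t) * (starRingEnd ℂ) (f n)) / ((Nt:ℂ))^(s+1) := by
          refine Finset.sum_congr rfl fun t ht => ?_
          rw [mder_extendZ Nt N h2N f hf t ht,
            gowersAvg_extend s N Nt hs hN hKN _ (hgsupp t)]
  rw [himg, ZMod.card, ← Finset.sum_div, div_div, ← pow_succ, re_div_pow, Complex.re_sum]

end
end MLD

/-- Section 2 of the paper: if `f : [N] → D` (extended by zero to `ℤ`) has
`‖f‖_{U^{s+1}[N]} ≥ δ`, then `‖Δ_h f‖_{U^s[N]} ≥ c` for at least `c·N` values of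
`h ∈ [−N,N]`, where `c = c(s,δ) > 0`. -/
theorem many_large_derivatives (s : ℕ) (hs : 1 ≤ s) (δ : ℝ) (hδ0 : 0 < δ) (hδ1 : δ ≤ 1) :
    ∃ c : ℝ, 0 < c ∧
      ∀ N : ℕ, 1 ≤ N → ∀ f : ℤ → ℂ,
        (∀ n : ℤ, ‖f n‖ ≤ 1) →
        (∀ n : ℤ, n ∉ Finset.Icc (1 : ℤ) (N : ℤ) → f n = 0) →
        δ ≤ gowersNormInt (s + 1) N f →
        c * (N : ℝ) ≤
          (((Finset.Icc (-(N : ℤ)) (N : ℤ)).filter fun h : ℤ =>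
            c ≤ gowersNormInt s N (fun n => f (n + h) * (starRingEnd ℂ) (f n))).card : ℝ) := by
  classical
  -- numerical constants
  set P : ℕ := 2^(s+1) with hP
  set c₁ : ℝ := (1/(2*(s:ℝ)+4))^(s+2) with hc₁
  set K₀ : ℝ := δ^P * c₁ with hK₀
  set η : ℝ := K₀ / (2^s * 4) with hη
  have hc₁pos : 0 < c₁ := by positivity
  have hK₀pos : 0 < K₀ := by positivity
  have hηpos : 0 < η := by positivity
  have hc₁le : c₁ ≤ 1 := by
    refine pow_le_one₀ (by positivity) ?_
    rw [div_le_one (by positivity)]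
    linarith [Nat.cast_nonneg (α := ℝ) s]
  have hδP : δ^P ≤ 1 := pow_le_one₀ hδ0.le hδ1
  have hK₀le : K₀ ≤ 1 := by
    rw [hK₀]
    nlinarith
  have hηle : η ≤ 1 := by
    rw [hη]
    have h1 : (1:ℝ) ≤ 2^s * 4 := by
      have h2 : (1:ℝ) ≤ 2^s := one_le_pow₀ (by norm_num)
      nlinarith
    calc K₀ / (2^s * 4) ≤ K₀ := div_le_self hK₀pos.le h1
      _ ≤ 1 := hK₀le
  refine ⟨η, hηpos, ?_⟩
  intro N hN f hf1 hfs hnorm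
  rw [gowersNormInt] at hnorm
  -- moduli
  set M : ℕ := 2^s*N with hM
  set Nt : ℕ := 2^(s+1)*N with hNt
  have h2pow : s + 1 ≤ 2^s := Nat.lt_two_pow_self
  have h2pow' : s + 2 ≤ 2^(s+1) := Nat.lt_two_pow_self
  have hM0 : M ≠ 0 := by rw [hM]; positivity
  have hNt0 : Nt ≠ 0 := by rw [hNt]; positivity
  haveI : NeZero M := ⟨hM0⟩
  haveI : NeZero Nt := ⟨hNt0⟩
  have hKM : (s+1)*N ≤ M := by rw [hM]; exact Nat.mul_le_mul_right N h2pow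
  have hKNt : (s+1+1)*N ≤ Nt := by rw [hNt]; exact Nat.mul_le_mul_right N h2pow'
  have hKNt' : (s+1)*N ≤ Nt := le_trans (Nat.mul_le_mul_right N (by omega)) hKNt
  have h2N : 2*N ≤ Nt := by
    refine le_trans (Nat.mul_le_mul_right N ?_) hKNt
    omega
  -- the derivative functions and their integral Gowers sums
  have hgsupp : ∀ t : ℤ, ∀ n : ℤ, n ∉ Finset.Icc (1:ℤ) (N:ℤ) →
      (fun n => f (n + t) * (starRingEnd ℂ) (f n)) n = 0 := by
    intro t n hn
    simp only
    rw [hfs n hn, map_zero, mul_zero]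
  set a : ℤ → ℝ := fun t => (MLD.Tsum s N (fun n => f (n + t) * (starRingEnd ℂ) (f n))).re
    with ha
  set B₀ : ℝ := MLD.Rcnt s N with hB₀
  set B₁ : ℝ := MLD.Rcnt (s+1) N with hB₁
  set IccT : Finset ℤ := Finset.Icc (1-(N:ℤ)) ((N:ℤ)-1) with hIccT
  have hanonneg : ∀ t : ℤ, 0 ≤ a t := by
    intro t
    rw [ha]
    exact MLD.Tsum_re_nonneg s N M hs hN hKM _ (hgsupp t)
  have haB : ∀ t : ℤ, a t ≤ B₀ := by
    intro t
    rw [ha, hB₀]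
    refine le_trans (Complex.re_le_norm _) (MLD.abs_Tsum_le s N _ ?_)
    intro n
    by_cases hn : 1 ≤ n ∧ n ≤ (N:ℤ)
    · rw [if_pos hn]
      simp only [norm_mul]
      calc ‖f (n + t)‖ * ‖(starRingEnd ℂ) (f n)‖
          ≤ 1 * 1 := by
            rw [Complex.norm_conj]
            exact mul_le_mul (hf1 _) (hf1 _) (norm_nonneg _) (by norm_num)
        _ = 1 := by norm_num
    · rw [if_neg hn]
      have h0 : f n = 0 := hfs n (by rw [Finset.mem_Icc]; omega)
      simp only [h0, map_zero, mul_zero, map_zero]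
      norm_num
  -- positivity of counts
  have hB₀pos : (0:ℝ) < B₀ := lt_of_lt_of_le one_pos (MLD.Rcnt_ge_one s N hN)
  have hB₁pos : (0:ℝ) < B₁ := lt_of_lt_of_le one_pos (MLD.Rcnt_ge_one (s+1) N hN)
  have hNpos : (0:ℝ) < (N:ℝ) := by exact_mod_cast hN
  have hNtpos : (0:ℝ) < (Nt:ℝ)^(s+2) :=
    pow_pos (by exact_mod_cast Nat.pos_of_ne_zero hNt0) _
  -- the Gowers norm hypothesis, rewritten
  have hAnorm : gowersNormZMod (s+1) Nt (extendZ Nt N f)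
      = ((∑ t ∈ IccT, a t) / (Nt:ℝ)^(s+2)) ^ ((1:ℝ)/2^(s+1)) := by
    rw [gowersNormZMod, dif_neg hNt0, gowersNorm,
      MLD.avg_decomp s N hs hN Nt hKNt' h2N f hfs]
  have hBnorm : gowersNormZMod (s+1) Nt (indicZ Nt N)
      = (B₁ / (Nt:ℝ)^(s+2)) ^ ((1:ℝ)/2^(s+1)) := by
    rw [MLD.gowersNormZMod_indic (s+1) N Nt (by omega) hN hKNt hNt0, hB₁]
  rw [hAnorm, hBnorm] at hnorm
  -- extract the key inequality δ^P * B₁ ≤ ∑ a t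
  set SA : ℝ := ∑ t ∈ IccT, a t with hSA
  have hSA0 : 0 ≤ SA := Finset.sum_nonneg fun t _ => hanonneg t
  have hkey : δ^P * B₁ ≤ SA := by
    set X : ℝ := SA / (Nt:ℝ)^(s+2) with hX
    set Y : ℝ := B₁ / (Nt:ℝ)^(s+2) with hY
    have hX0 : 0 ≤ X := div_nonneg hSA0 hNtpos.le
    have hY0 : 0 < Y := div_pos hB₁pos hNtpos
    have hr1 : δ * Y ^ ((1:ℝ)/2^(s+1)) ≤ X ^ ((1:ℝ)/2^(s+1)) := by
      have hyr : 0 < Y ^ ((1:ℝ)/2^(s+1)) := Real.rpow_pos_of_pos hY0 _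
      rw [le_div_iff₀ hyr] at hnorm
      exact hnorm
    have hrP : ((1:ℝ)/2^(s+1)) * (P:ℝ) = 1 := by
      rw [hP]
      push_cast
      field_simp
    have hXr : (X ^ ((1:ℝ)/2^(s+1))) ^ P = X := by
      rw [← Real.rpow_natCast (X ^ ((1:ℝ)/2^(s+1))) P, ← Real.rpow_mul hX0, hrP,
        Real.rpow_one]
    have hYr : (Y ^ ((1:ℝ)/2^(s+1))) ^ P = Y := by
      rw [← Real.rpow_natCast (Y ^ ((1:ℝ)/2^(s+1))) P, ← Real.rpow_mul hY0.le, hrP,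
        Real.rpow_one]
    have hfin : δ^P * Y ≤ X := by
      calc δ^P * Y = (δ * Y ^ ((1:ℝ)/2^(s+1)))^P := by rw [mul_pow, hYr]
        _ ≤ (X ^ ((1:ℝ)/2^(s+1)))^P := by
            refine pow_le_pow_left₀ ?_ hr1 P
            exact mul_nonneg hδ0.le (Real.rpow_nonneg hY0.le _)
        _ = X := hXr
    have := mul_le_mul_of_nonneg_right hfin hNtpos.le
    rw [hX, hY] at this
    calc δ^P * B₁ = δ^P * (B₁ / (Nt:ℝ)^(s+2)) * (Nt:ℝ)^(s+2) := by field_simp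
      _ ≤ SA / (Nt:ℝ)^(s+2) * (Nt:ℝ)^(s+2) := this
      _ = SA := by field_simp
  -- lower bound for B₁
  have hB1low : ((N:ℝ)/(2*(s:ℝ)+4))^(s+2) ≤ B₁ := by
    by_cases hsmall : (N:ℝ) ≤ 2*(s:ℝ)+4
    · calc ((N:ℝ)/(2*(s:ℝ)+4))^(s+2) ≤ 1 := by
            refine pow_le_one₀ (by positivity) ?_
            rw [div_le_one (by positivity)]
            exact hsmall
        _ ≤ B₁ := MLD.Rcnt_ge_one (s+1) N hN
    · push_neg at hsmall
      have hq := MLD.Rcnt_lower (s+1) N hN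
      rw [← hB₁] at hq
      refine le_trans (pow_le_pow_left₀ (by positivity) ?_ (s+2)) hq
      have hdm := Nat.div_add_mod N (s+2)
      have hmlt : N % (s+2) < s+2 := Nat.mod_lt _ (by omega)
      have hcast : ((s:ℝ)+2) * ((N/(s+2) : ℕ):ℝ) + ((N % (s+2) : ℕ):ℝ) = (N:ℝ) := by
        exact_mod_cast hdm
      have hmc : ((N % (s+2) : ℕ):ℝ) < (s:ℝ)+2 := by exact_mod_cast hmlt
      rw [div_le_iff₀ (by positivity)]
      nlinarith
  have hSAlow : K₀ * (N:ℝ)^(s+2) ≤ SA := by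
    have h1 : ((N:ℝ)/(2*(s:ℝ)+4))^(s+2) = (N:ℝ)^(s+2) * c₁ := by
      rw [hc₁, ← mul_pow]
      congr 1
      ring
    calc K₀ * (N:ℝ)^(s+2) = δ^P * (((N:ℝ)/(2*(s:ℝ)+4))^(s+2)) := by
          rw [h1, hK₀]; ring
      _ ≤ δ^P * B₁ := by
          refine mul_le_mul_of_nonneg_left hB1low ?_
          positivity
      _ ≤ SA := hkey
  -- pigeonhole
  set good : Finset ℤ := IccT.filter (fun t => η * B₀ ≤ a t) with hgood
  have hB₀le : B₀ ≤ 2^s * (N:ℝ)^(s+1) := by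
    calc B₀ ≤ (N:ℝ)*(2*(N:ℝ))^s := MLD.Rcnt_le s N hN
      _ = 2^s * (N:ℝ)^(s+1) := by rw [mul_pow]; ring
  have hcardIcc : ((IccT.card : ℝ)) ≤ 2*(N:ℝ) := by
    have h1 : IccT.card = 2*N-1 := by rw [hIccT, Int.card_Icc]; omega
    rw [h1]
    have h2 : (2*N-1 : ℕ) ≤ 2*N := by omega
    calc ((2*N-1 : ℕ) : ℝ) ≤ ((2*N : ℕ) : ℝ) := by exact_mod_cast h2
      _ = 2*(N:ℝ) := by push_cast; ring
  have hsum_split : SA ≤ good.card * B₀ + (IccT.card) * (η * B₀) := by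
    rw [hSA, ← Finset.sum_filter_add_sum_filter_not IccT (fun t => η * B₀ ≤ a t) a]
    have h1 : ∑ t ∈ IccT.filter (fun t => η * B₀ ≤ a t), a t ≤ good.card * B₀ := by
      calc ∑ t ∈ IccT.filter (fun t => η * B₀ ≤ a t), a t
          ≤ ∑ _t ∈ IccT.filter (fun t => η * B₀ ≤ a t), B₀ :=
            Finset.sum_le_sum fun t _ => haB t
        _ = good.card * B₀ := by rw [Finset.sum_const, nsmul_eq_mul, hgood]
    have h2 : ∑ t ∈ IccT.filter (fun t => ¬(η * B₀ ≤ a t)), a t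
        ≤ IccT.card * (η * B₀) := by
      calc ∑ t ∈ IccT.filter (fun t => ¬(η * B₀ ≤ a t)), a t
          ≤ ∑ _t ∈ IccT.filter (fun t => ¬(η * B₀ ≤ a t)), (η * B₀) := by
            refine Finset.sum_le_sum fun t ht => ?_
            have := (Finset.mem_filter.mp ht).2
            linarith [lt_of_not_ge this]
        _ = (IccT.filter (fun t => ¬(η * B₀ ≤ a t))).card * (η * B₀) := by
            rw [Finset.sum_const, nsmul_eq_mul]
        _ ≤ IccT.card * (η * B₀) := by
            refine mul_le_mul_of_nonneg_right ?_ (mul_nonneg hηpos.le hB₀pos.le)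
            exact_mod_cast Finset.card_filter_le _ _
    linarith
  have hgoodcard : η * (N:ℝ) ≤ (good.card : ℝ) := by
    have hKη : K₀ = η * (2^s * 4) := by
      rw [hη]
      field_simp
    have h3 : K₀ * (N:ℝ)^(s+2) ≤ good.card * B₀ + 2*(N:ℝ)*(η * B₀) := by
      refine le_trans hSAlow (le_trans hsum_split ?_)
      have := mul_le_mul_of_nonneg_right hcardIcc (mul_nonneg hηpos.le hB₀pos.le)
      linarith
    by_contra hcon
    push_neg at hcon
    have hgB : (good.card : ℝ) * B₀ < η * (N:ℝ) * B₀ :=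
      mul_lt_mul_of_pos_right hcon hB₀pos
    have hNB : (N:ℝ) * B₀ ≤ 2^s * (N:ℝ)^(s+2) := by
      calc (N:ℝ) * B₀ ≤ (N:ℝ) * (2^s * (N:ℝ)^(s+1)) :=
            mul_le_mul_of_nonneg_left hB₀le hNpos.le
        _ = 2^s * (N:ℝ)^(s+2) := by ring
    have hfinal : K₀ * (N:ℝ)^(s+2) < 3 * η * (2^s * (N:ℝ)^(s+2)) := by
      calc K₀ * (N:ℝ)^(s+2) ≤ good.card * B₀ + 2*(N:ℝ)*(η * B₀) := h3
        _ < η * (N:ℝ) * B₀ + 2*(N:ℝ)*(η * B₀) := by linarith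
        _ = 3 * η * ((N:ℝ) * B₀) := by ring
        _ ≤ 3 * η * (2^s * (N:ℝ)^(s+2)) := by
            refine mul_le_mul_of_nonneg_left hNB ?_
            linarith
    rw [hKη] at hfinal
    have hQ : (0:ℝ) < 2^s * (N:ℝ)^(s+2) :=
      mul_pos (pow_pos (by norm_num) s) (pow_pos hNpos (s+2))
    have h4 : η * (2^s*4) * (N:ℝ)^(s+2) = 4 * (η * (2^s * (N:ℝ)^(s+2))) := by ring
    have h5 : 3 * η * (2^s * (N:ℝ)^(s+2)) = 3 * (η * (2^s * (N:ℝ)^(s+2))) := by ring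
    rw [h4, h5] at hfinal
    have h6 : 0 < η * (2^s * (N:ℝ)^(s+2)) := mul_pos hηpos hQ
    linarith
  -- each good t has a large U^s norm
  have hnorm_good : ∀ t ∈ good,
      η ≤ gowersNormInt s N (fun n => f (n + t) * (starRingEnd ℂ) (f n)) := by
    intro t ht
    obtain ⟨htI, hta⟩ := Finset.mem_filter.mp ht
    have hMnorm : gowersNormInt s N (fun n => f (n + t) * (starRingEnd ℂ) (f n))
        = (a t / B₀) ^ ((1:ℝ)/2^s) := by
      rw [gowersNormInt]
      rw [MLD.gowersNormZMod_extend s N M hs hN hKM hM0 _ (hgsupp t)]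
      rw [MLD.gowersNormZMod_indic s N M hs hN hKM hM0]
      show (a t / (M:ℝ)^(s+1)) ^ ((1:ℝ)/2^s) / (B₀ / (M:ℝ)^(s+1)) ^ ((1:ℝ)/2^s)
        = (a t / B₀) ^ ((1:ℝ)/2^s)
      have hMpos : (0:ℝ) < (M:ℝ)^(s+1) :=
        pow_pos (by exact_mod_cast Nat.pos_of_ne_zero hM0) _
      rw [← Real.div_rpow (div_nonneg (hanonneg t) hMpos.le)
        (div_nonneg (MLD.Rcnt_nonneg s N) hMpos.le)]
      congr 1
      rw [div_div_div_cancel_right₀]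
      exact hMpos.ne'
    rw [hMnorm]
    have h1 : η ≤ a t / B₀ := (le_div_iff₀ hB₀pos).mpr hta
    calc η = η ^ (1:ℝ) := (Real.rpow_one η).symm
      _ ≤ η ^ ((1:ℝ)/2^s) := by
          refine Real.rpow_le_rpow_of_exponent_ge hηpos hηle ?_
          rw [div_le_one (by positivity)]
          exact one_le_pow₀ (by norm_num)
      _ ≤ (a t / B₀) ^ ((1:ℝ)/2^s) := Real.rpow_le_rpow hηpos.le h1 (by positivity)
  -- conclude
  have hsub : good ⊆ (Finset.Icc (-(N:ℤ)) (N:ℤ)).filter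
      (fun h : ℤ => η ≤ gowersNormInt s N (fun n => f (n + h) * (starRingEnd ℂ) (f n))) := by
    intro t ht
    rw [Finset.mem_filter]
    have htI := (Finset.mem_filter.mp ht).1
    rw [hIccT, Finset.mem_Icc] at htI
    exact ⟨Finset.mem_Icc.mpr (by omega), hnorm_good t ht⟩
  calc η * (N:ℝ) ≤ (good.card : ℝ) := hgoodcard
    _ ≤ _ := by exact_mod_cast Finset.card_le_card hsub
end

section
/- Let s ≥ 1 and N ≥ 1 be integers and let f : [N] → D. If ‖f‖_{U^{s+1}[N]} = 1, then there exists a polynomial P ∈ ℝ[X] of degree at most s such that f(n) = e(P(n)) for all n ∈ [N]. -/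
open scoped BigOperators

noncomputable section Aux
open Complex Finset

/-- additive finite difference on `ℤ → ℝ` -/
def rdelta (u : ℤ → ℝ) : ℤ → ℝ := fun n => u (n + 1) - u n

/-- multiplicative finite difference on `ℤ → ℂ` -/
def cdelta (F : ℤ → ℂ) : ℤ → ℂ := fun n => F (n + 1) * (starRingEnd ℂ) (F n)

lemma iterDeriv_succ {G : Type*} [Add G] (d : ℕ) (h : Fin (d+1) → G) (f : G → ℂ) :
    iterDeriv (d+1) h f = iterDeriv d (fun i => h i.succ) (mder (h 0) f) := rfl

/-- domination: if `u` is real-nonneg-valued and dominates `|F|` pointwise, this persists. -/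
lemma iterDeriv_dom {G : Type*} [AddCommGroup G] (d : ℕ) :
    ∀ (h : Fin d → G) (F u : G → ℂ),
    (∀ x, (u x).im = 0 ∧ 0 ≤ (u x).re ∧ ‖F x‖ ≤ (u x).re) →
    ∀ x, (iterDeriv d h u x).im = 0 ∧ 0 ≤ (iterDeriv d h u x).re ∧
      ‖iterDeriv d h F x‖ ≤ (iterDeriv d h u x).re := by
  induction d with
  | zero => intro h F u hu x; exact hu x
  | succ d ih =>
    intro h F u hu x
    rw [iterDeriv_succ, iterDeriv_succ]
    refine ih _ _ _ ?_ x
    intro y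
    obtain ⟨h1, h2, h3⟩ := hu y
    obtain ⟨h1', h2', h3'⟩ := hu (y + h 0)
    have hco : (starRingEnd ℂ) (u y) = u y := by
      apply Complex.ext <;> simp [h1]
    constructor
    · simp [mder, hco, Complex.mul_im, h1, h1']
    constructor
    · simp only [mder, hco, Complex.mul_re, h1, h1', mul_zero, sub_zero]
      exact mul_nonneg h2' h2
    · simp only [mder, hco, Complex.mul_re, h1, h1', norm_mul, Complex.norm_conj,
        mul_zero, sub_zero]
      exact mul_le_mul h3' h3 (norm_nonneg _) h2'

/-- all-zero directions give the iterate of `z ↦ z * conj z` -/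
lemma iterDeriv_zero_dir {G : Type*} [AddCommGroup G] (d : ℕ) :
    ∀ (F : G → ℂ) (x : G),
      iterDeriv d (fun _ => (0:G)) F x = (fun z : ℂ => z * (starRingEnd ℂ) z)^[d] (F x) := by
  induction d with
  | zero => intro F x; rfl
  | succ d ih =>
    intro F x
    rw [iterDeriv_succ, ih, Function.iterate_succ_apply]
    simp [mder]

lemma q_iterate_normSq (d : ℕ) (z : ℂ) :
    (fun z : ℂ => z * (starRingEnd ℂ) z)^[d+1] z = ((Complex.normSq z ^ (2^d) : ℝ) : ℂ) := by
  induction d generalizing z with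
  | zero => simp [Complex.mul_conj]
  | succ d ih =>
    rw [Function.iterate_succ_apply, Complex.mul_conj, ih, Complex.normSq_ofReal]
    congr 1
    rw [← sq, ← pow_mul, pow_succ]
    ring

lemma q_iterate_one (d : ℕ) :
    (fun z : ℂ => z * (starRingEnd ℂ) z)^[d] (1:ℂ) = 1 := by
  apply Function.iterate_fixed
  simp

lemma cdelta_iterate_one (d : ℕ) (a : ℤ) : cdelta^[d] (fun _ => (1:ℂ)) a = 1 := by
  have : cdelta (fun _ => (1:ℂ)) = fun _ => (1:ℂ) := by
    funext n; simp [cdelta]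
  rw [show cdelta^[d] (fun _ => (1:ℂ)) = fun _ => (1:ℂ) from Function.iterate_fixed this d]

end Aux

noncomputable section Aux2
open Complex Finset Polynomial

/-- Transfer: const-1 directions on `ZMod M` compute `cdelta` iterates of `F : ℤ → ℂ`,
provided the two functions agree on the relevant window of naturals. -/
lemma iterDeriv_one_transfer (M : ℕ) [NeZero M] (d : ℕ) :
    ∀ (F : ℤ → ℂ) (Ft : ZMod M → ℂ) (a : ℕ),
    (∀ m : ℕ, a ≤ m → m ≤ a + d → Ft (m : ZMod M) = F (m : ℤ)) →
    iterDeriv d (fun _ => (1 : ZMod M)) Ft ((a : ℕ) : ZMod M) = cdelta^[d] F (a : ℤ) := by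
  induction d with
  | zero => intro F Ft a hag; exact hag a le_rfl (by omega)
  | succ d ih =>
    intro F Ft a hag
    rw [iterDeriv_succ, Function.iterate_succ_apply]
    refine ih (cdelta F) (mder 1 Ft) a ?_
    intro m hm hm'
    have h1 : Ft ((m : ℕ) : ZMod M) = F (m : ℤ) := hag m hm (by omega)
    have h2 : Ft (((m+1) : ℕ) : ZMod M) = F ((m+1 : ℕ) : ℤ) := hag (m+1) (by omega) (by omega)
    simp only [mder, cdelta]
    have e1 : ((m : ℕ) : ZMod M) + 1 = (((m+1) : ℕ) : ZMod M) := by push_cast; ring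
    rw [e1, h1, h2]
    push_cast
    ring_nf

/-- Transfer: cdelta iterates of a unimodular `F = eC ∘ u` are `eC` of rdelta iterates. -/
lemma cdelta_eC_transfer (d : ℕ) :
    ∀ (F : ℤ → ℂ) (u : ℤ → ℝ) (a : ℤ),
    (∀ m : ℤ, a ≤ m → m ≤ a + d → F m = eC (u m)) →
    cdelta^[d] F a = eC (rdelta^[d] u a) := by
  induction d with
  | zero => intro F u a hag; exact hag a le_rfl (by omega)
  | succ d ih =>
    intro F u a hag
    rw [Function.iterate_succ_apply, Function.iterate_succ_apply]
    refine ih (cdelta F) (rdelta u) a ?_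
    intro m hm hm'
    have h1 : F m = eC (u m) := hag m hm (by omega)
    have h2 : F (m+1) = eC (u (m+1)) := hag (m+1) (by omega) (by omega)
    simp only [cdelta, rdelta, h1, h2, eC]
    rw [← Complex.exp_conj, ← Complex.exp_add]
    congr 1
    have : (starRingEnd ℂ) (2 * (Real.pi:ℂ) * Complex.I * (u m : ℝ)) =
        -(2 * (Real.pi:ℂ) * Complex.I * (u m : ℝ)) := by
      simp only [map_mul, map_ofNat, Complex.conj_I, Complex.conj_ofReal]
      ring
    rw [this]
    push_cast
    ring

lemma rdelta_iterate_sub (d : ℕ) : ∀ (u v : ℤ → ℝ) (a : ℤ),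
    rdelta^[d] (fun n => u n - v n) a = rdelta^[d] u a - rdelta^[d] v a := by
  induction d with
  | zero => intro u v a; rfl
  | succ d ih =>
    intro u v a
    rw [Function.iterate_succ_apply, Function.iterate_succ_apply,
      Function.iterate_succ_apply]
    have : rdelta (fun n => u n - v n) = fun n => rdelta u n - rdelta v n := by
      funext n; simp [rdelta]; ring
    rw [this, ih]

/-- The d-th finite difference of a polynomial of degree `< d` vanishes. -/
lemma rdelta_poly (d : ℕ) : ∀ (P : Polynomial ℝ), P.degree < (d : ℕ) →
    ∀ a : ℤ, rdelta^[d] (fun n : ℤ => P.eval (n : ℝ)) a = 0 := by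
  induction d with
  | zero =>
    intro P hP a
    have : P = 0 := by
      rw [← Polynomial.degree_eq_bot]
      exact Nat.WithBot.lt_zero_iff.mp (by exact_mod_cast hP)
    simp [this]
  | succ d ih =>
    intro P hP a
    set Q := P.comp (Polynomial.X + 1) - P with hQ
    have heval : rdelta (fun n : ℤ => P.eval (n : ℝ)) = fun n : ℤ => Q.eval (n : ℝ) := by
      funext n
      simp only [rdelta, hQ, Polynomial.eval_sub, Polynomial.eval_comp,
        Polynomial.eval_add, Polynomial.eval_X, Polynomial.eval_one]
      push_cast
      ring
    have hQdeg : Q.degree < (d : ℕ) := by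
      by_cases hP0 : P = 0
      · simp [hQ, hP0]
      · have hX1 : (Polynomial.X + 1 : Polynomial ℝ).natDegree = 1 := by
          rw [show (Polynomial.X + 1 : Polynomial ℝ) = Polynomial.X + Polynomial.C 1 by simp]
          exact Polynomial.natDegree_X_add_C 1
        have hlc : (P.comp (Polynomial.X + 1)).leadingCoeff = P.leadingCoeff := by
          rw [Polynomial.leadingCoeff_comp (by rw [hX1]; norm_num)]
          have : (Polynomial.X + 1 : Polynomial ℝ).leadingCoeff = 1 := by
            rw [show (Polynomial.X + 1 : Polynomial ℝ) = Polynomial.X + Polynomial.C 1 by simp]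
            exact Polynomial.leadingCoeff_X_add_C 1
          rw [this, one_pow, mul_one]
        have hcomp0 : P.comp (Polynomial.X + 1) ≠ 0 := by
          intro hc
          apply hP0
          have := hlc
          rw [hc] at this
          simp at this
          exact Polynomial.leadingCoeff_eq_zero.mp this.symm
        have hdeg : (P.comp (Polynomial.X + 1)).degree = P.degree := by
          rw [Polynomial.degree_eq_natDegree hcomp0, Polynomial.degree_eq_natDegree hP0]
          norm_cast
          rw [Polynomial.natDegree_comp, hX1, mul_one]
        have hlt : Q.degree < P.degree := by
          rw [hQ]
          calc (P.comp (Polynomial.X + 1) - P).degree < (P.comp (Polynomial.X + 1)).degree :=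
            Polynomial.degree_sub_lt hdeg hcomp0 hlc
          _ = P.degree := hdeg
        have hPd : P.degree < ((d:ℕ) + 1 : ℕ) := hP
        calc Q.degree < P.degree := hlt
        _ ≤ (d : ℕ) := by
          rw [Polynomial.degree_eq_natDegree hP0] at hPd ⊢
          exact_mod_cast Nat.lt_succ_iff.mp (by exact_mod_cast hPd)
    rw [Function.iterate_succ_apply, heval]
    exact ih Q hQdeg a

/-- integrality propagation: if the first `d` window values and the `d`-th difference are
integers, so is the last window value. -/
lemma int_window (d : ℕ) : ∀ (u : ℤ → ℝ) (a : ℤ),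
    (∀ k : ℕ, k < d → ∃ m : ℤ, u (a + k) = m) →
    (∃ m : ℤ, rdelta^[d] u a = m) → ∃ m : ℤ, u (a + d) = m := by
  induction d with
  | zero => intro u a _ h; simpa using h
  | succ d ih =>
    intro u a hw hd
    have hstep : ∃ m : ℤ, rdelta u (a + d) = m := by
      refine ih (rdelta u) a ?_ ?_
      · intro k hk
        obtain ⟨m1, hm1⟩ := hw (k+1) (by omega)
        obtain ⟨m2, hm2⟩ := hw k (by omega)
        refine ⟨m1 - m2, ?_⟩
        simp only [rdelta]
        rw [show a + (k:ℤ) + 1 = a + ((k+1:ℕ):ℤ) by push_cast; ring, hm1, hm2]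
        push_cast; ring
      · rw [← Function.iterate_succ_apply]
        exact hd
    obtain ⟨m1, hm1⟩ := hstep
    obtain ⟨m2, hm2⟩ := hw d (by omega)
    refine ⟨m1 + m2, ?_⟩
    have : u (a + d + 1) - u (a + d) = m1 := hm1
    rw [show a + ((d+1:ℕ):ℤ) = a + d + 1 by push_cast; ring]
    push_cast
    rw [show u (a + d + 1) = (u (a + d + 1) - u (a+d)) + u (a+d) by ring, this, hm2]

end Aux2

noncomputable section Aux3
open Complex Finset

lemma eC_add (x y : ℝ) : eC (x + y) = eC x * eC y := by
  rw [eC, eC, eC, ← Complex.exp_add]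
  congr 1
  push_cast
  ring

lemma eC_int (m : ℤ) : eC (m : ℝ) = 1 := by
  rw [eC, Complex.exp_eq_one_iff]
  exact ⟨m, by push_cast; ring⟩

lemma eC_eq_one_iff (t : ℝ) : eC t = 1 ↔ ∃ m : ℤ, t = m := by
  constructor
  · intro h
    rw [eC, Complex.exp_eq_one_iff] at h
    obtain ⟨n, hn⟩ := h
    refine ⟨n, ?_⟩
    have : (t : ℂ) = (n : ℂ) := by
      have h2 : 2 * (Real.pi:ℂ) * Complex.I * (t:ℂ) = 2 * (Real.pi:ℂ) * Complex.I * (n:ℂ) := by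
        rw [hn]; ring
      exact mul_left_cancel₀ Complex.two_pi_I_ne_zero h2
    exact_mod_cast this
  · rintro ⟨m, rfl⟩; exact eC_int m

lemma eC_arg (z : ℂ) (hz : ‖z‖ = 1) : eC (z.arg / (2 * Real.pi)) = z := by
  have hpi : (Real.pi : ℂ) ≠ 0 := Complex.ofReal_ne_zero.mpr Real.pi_ne_zero
  have harg : (2 * (Real.pi:ℂ) * Complex.I) * ((z.arg / (2 * Real.pi) : ℝ) : ℂ)
      = z.arg * Complex.I := by
    push_cast
    field_simp
  rw [eC, harg]
  conv_rhs => rw [← Complex.norm_mul_exp_arg_mul_I z]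
  rw [hz]
  simp

/-- nonnegativity of the full Gowers sum (for `d ≥ 1`). -/
lemma gowers_sum_nonneg {G : Type*} [AddCommGroup G] [Fintype G] (d : ℕ) :
    ∀ F : G → ℂ,
    0 ≤ (∑ x : G, ∑ h : Fin (d+1) → G, iterDeriv (d+1) h F x).re ∧
    (∑ x : G, ∑ h : Fin (d+1) → G, iterDeriv (d+1) h F x).im = 0 := by
  induction d with
  | zero =>
    intro F
    have key : (∑ x : G, ∑ h : Fin 1 → G, iterDeriv 1 h F x)
        = (∑ z : G, F z) * (starRingEnd ℂ) (∑ z : G, F z) := by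
      have h1 : ∀ x : G, ∑ h : Fin 1 → G, iterDeriv 1 h F x
          = (∑ z : G, F z) * (starRingEnd ℂ) (F x) := by
        intro x
        have e1 : ∑ y : G, F (x + y) * (starRingEnd ℂ) (F x)
            = ∑ h : Fin 1 → G, iterDeriv 1 h F x :=
          Equiv.sum_comp (Equiv.funUnique (Fin 1) G).symm
            (fun h : Fin 1 → G => iterDeriv 1 h F x)
        rw [← e1, ← Finset.sum_mul]
        congr 1
        exact Equiv.sum_comp (Equiv.addLeft x) F
      rw [Finset.sum_congr rfl (fun x _ => h1 x), ← Finset.mul_sum, ← map_sum]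
    rw [key, Complex.mul_conj]
    simp [Complex.normSq_nonneg]
  | succ d ih =>
    intro F
    have key : (∑ x : G, ∑ h : Fin (d+2) → G, iterDeriv (d+2) h F x)
        = ∑ h₀ : G, ∑ x : G, ∑ h' : Fin (d+1) → G, iterDeriv (d+1) h' (mder h₀ F) x := by
      have step : ∀ x : G, (∑ h : Fin (d+2) → G, iterDeriv (d+2) h F x)
          = ∑ h₀ : G, ∑ h' : Fin (d+1) → G, iterDeriv (d+1) h' (mder h₀ F) x := by
        intro x
        have e2 : ∑ p : G × (Fin (d+1) → G), iterDeriv (d+2) (Fin.cons p.1 p.2) F x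
            = ∑ h : Fin (d+2) → G, iterDeriv (d+2) h F x :=
          Equiv.sum_comp (Fin.consEquiv (fun _ : Fin (d+2) => G))
            (fun h : Fin (d+2) → G => iterDeriv (d+2) h F x)
        rw [← e2, Fintype.sum_prod_type]
        refine Finset.sum_congr rfl fun h₀ _ => Finset.sum_congr rfl fun h' _ => ?_
        rw [iterDeriv_succ]
        simp [Fin.cons_succ, Fin.cons_zero]
      rw [Finset.sum_congr rfl (fun x _ => step x)]
      exact Finset.sum_comm
    constructor
    · rw [key, Complex.re_sum]
      exact Finset.sum_nonneg (fun h₀ _ => (ih (mder h₀ F)).1)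
    · rw [key, Complex.im_sum]
      exact Finset.sum_eq_zero (fun h₀ _ => (ih (mder h₀ F)).2)

end Aux3

noncomputable section Aux4
open Complex Finset

lemma pow_eq_one_nonneg {x : ℝ} (hx : 0 ≤ x) {n : ℕ} (hn : n ≠ 0) (h : x ^ n = 1) : x = 1 := by
  rcases lt_trichotomy x 1 with h1 | h1 | h1
  · have := pow_lt_one₀ hx h1 hn
    linarith
  · exact h1
  · have := one_lt_pow₀ h1 hn
    linarith

lemma complex_eq_one {z : ℂ} (h1 : z.re = 1) (h2 : ‖z‖ ≤ 1) : z = 1 := by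
  have h3 : Complex.normSq z ≤ 1 := by
    rw [Complex.normSq_eq_norm_sq]
    nlinarith [norm_nonneg z]
  have h5 : z.re * z.re + z.im * z.im ≤ 1 := by
    rw [← Complex.normSq_apply]
    exact h3
  have h6 : z.im * z.im ≤ 0 := by nlinarith
  have h7 : z.im = 0 := by nlinarith [mul_self_nonneg z.im]
  apply Complex.ext <;> simp [h1, h7]

end Aux4


/-- The extreme case `δ = 1` of the inverse conjecture: if `f : [N] → D` has
`‖f‖_{U^{s+1}[N]} = 1`, then `f(n) = e(P(n))` on `[N]` for some real polynomial `P` of degree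
at most `s`. -/
theorem extreme_case_phase_polynomial (s N : ℕ) (hs : 1 ≤ s) (hN : 1 ≤ N) (f : ℤ → ℂ)
    (hf : ∀ n ∈ Finset.Icc (1 : ℤ) (N : ℤ), ‖f n‖ ≤ 1)
    (hnorm : gowersNormInt (s + 1) N f = 1) :
    ∃ P : Polynomial ℝ, P.natDegree ≤ s ∧
      ∀ n ∈ Finset.Icc (1 : ℤ) (N : ℤ), f n = eC (P.eval (n : ℝ)) := by
  simp only [gowersNormInt] at hnorm
  set d := s + 1 with hd
  set M := 2 ^ d * N with hM
  have h2d : 4 ≤ 2 ^ d := by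
    calc (4:ℕ) = 2 ^ 2 := rfl
    _ ≤ 2 ^ d := Nat.pow_le_pow_right (by norm_num) (by omega)
  have h4N : 4 * N ≤ M := by
    rw [hM]
    exact Nat.mul_le_mul_right N h2d
  have hNM : N < M := by omega
  have hM4 : 4 ≤ M := by omega
  have hM0 : M ≠ 0 := by omega
  haveI : NeZero M := ⟨hM0⟩
  haveI : Fact (1 < M) := ⟨by omega⟩
  set ft := extendZ M N f with hft
  set g := indicZ M N with hg
  -- pointwise values
  have hval : ∀ m : ℕ, 1 ≤ m → m ≤ N → ((m : ZMod M).val = m) := fun m h1 h2 =>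
    ZMod.val_natCast_of_lt (by omega)
  have hgval : ∀ m : ℕ, 1 ≤ m → m ≤ N → g ((m : ℕ) : ZMod M) = 1 := by
    intro m h1 h2
    rw [hg]
    simp only [indicZ, hval m h1 h2]
    simp [h1, h2]
  have hftval : ∀ m : ℕ, 1 ≤ m → m ≤ N → ft ((m : ℕ) : ZMod M) = f (m : ℤ) := by
    intro m h1 h2
    rw [hft]
    simp only [extendZ, hval m h1 h2]
    simp [h1, h2]
  -- domination
  have hdom : ∀ x : ZMod M, (g x).im = 0 ∧ 0 ≤ (g x).re ∧ ‖ft x‖ ≤ (g x).re := by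
    intro x
    rw [hg, hft]
    simp only [indicZ, extendZ]
    by_cases hx : 1 ≤ x.val ∧ x.val ≤ N
    · simp only [if_pos hx]
      refine ⟨by simp, by simp, ?_⟩
      have : ‖f (x.val : ℤ)‖ ≤ 1 := by
        apply hf
        rw [Finset.mem_Icc]
        exact ⟨by exact_mod_cast hx.1, by exact_mod_cast hx.2⟩
      simpa using this
    · simp [if_neg hx]
  have hptd := fun (p : ZMod M × (Fin d → ZMod M)) => iterDeriv_dom d p.2 ft g hdom p.1
  -- unfolding the norms
  have hzm : ∀ F : ZMod M → ℂ, gowersNormZMod d M F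
      = ((∑ p : ZMod M × (Fin d → ZMod M), iterDeriv d p.2 F p.1).re
          / (Fintype.card (ZMod M × (Fin d → ZMod M)) : ℝ)) ^ ((1:ℝ) / 2 ^ d) := by
    intro F
    simp only [gowersNormZMod, gowersNorm, gowersAvg, cexp]
    rw [dif_neg hM0]
    congr 1
    rw [Finset.card_univ]
    have : ((Fintype.card (ZMod M × (Fin d → ZMod M)) : ℂ))
        = (((Fintype.card (ZMod M × (Fin d → ZMod M)) : ℝ)) : ℂ) := by push_cast; ring
    rw [this, Complex.div_ofReal_re]
  -- abbreviations as real numbers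
  have hc0 : (0:ℝ) < (Fintype.card (ZMod M × (Fin d → ZMod M)) : ℝ) := by
    exact_mod_cast Fintype.card_pos
  -- nonnegativity of numerator sums
  have hSFnn : 0 ≤ (∑ p : ZMod M × (Fin d → ZMod M), iterDeriv d p.2 ft p.1).re := by
    rw [show (∑ p : ZMod M × (Fin d → ZMod M), iterDeriv d p.2 ft p.1)
        = ∑ x : ZMod M, ∑ h : Fin d → ZMod M, iterDeriv d h ft x from
      Fintype.sum_prod_type _]
    rw [hd]
    exact (gowers_sum_nonneg s ft).1
  -- pointwise inequality
  have hle : ∀ p ∈ (Finset.univ : Finset (ZMod M × (Fin d → ZMod M))),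
      (iterDeriv d p.2 ft p.1).re ≤ (iterDeriv d p.2 g p.1).re := fun p _ =>
    le_trans (Complex.re_le_norm _) (hptd p).2.2
  -- positivity of denominator sum
  have hSGpos : 0 < (∑ p : ZMod M × (Fin d → ZMod M), iterDeriv d p.2 g p.1).re := by
    rw [Complex.re_sum]
    refine Finset.sum_pos' (fun p _ => (hptd p).2.1) ⟨((1 : ZMod M), fun _ => 0), Finset.mem_univ _, ?_⟩
    have hg1 : g (1 : ZMod M) = 1 := by
      have h1 : ((1:ℕ) : ZMod M) = (1 : ZMod M) := by push_cast; ring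
      rw [← h1]
      exact hgval 1 le_rfl hN
    show (0:ℝ) < (iterDeriv d (fun _ => 0) g 1).re
    rw [iterDeriv_zero_dir, hg1, q_iterate_one]
    norm_num
  -- deduce equality of averages
  have hSeq : (∑ p : ZMod M × (Fin d → ZMod M), iterDeriv d p.2 ft p.1).re
      = (∑ p : ZMod M × (Fin d → ZMod M), iterDeriv d p.2 g p.1).re := by
    set A := (∑ p : ZMod M × (Fin d → ZMod M), iterDeriv d p.2 ft p.1).re with hA
    set B := (∑ p : ZMod M × (Fin d → ZMod M), iterDeriv d p.2 g p.1).re with hB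
    set c := (Fintype.card (ZMod M × (Fin d → ZMod M)) : ℝ) with hcc
    have hAB : A ≤ B := by
      rw [hA, hB, Complex.re_sum, Complex.re_sum]
      exact Finset.sum_le_sum hle
    rw [hzm, hzm] at hnorm
    have hBpos : 0 < B / c := div_pos hSGpos hc0
    have hBnn : (0:ℝ) < (B / c) ^ ((1:ℝ)/2^d) := Real.rpow_pos_of_pos hBpos _
    have heq : (A / c) ^ ((1:ℝ)/2^d) = (B / c) ^ ((1:ℝ)/2^d) :=
      (div_eq_one_iff_eq (ne_of_gt hBnn)).mp hnorm
    have key : ∀ x : ℝ, 0 ≤ x → (x ^ ((1:ℝ)/2^d)) ^ ((2:ℕ) ^ d) = x := by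
      intro x hx
      rw [← Real.rpow_natCast (x ^ ((1:ℝ)/2^d)) (2 ^ d), ← Real.rpow_mul hx]
      have : (1:ℝ)/2^d * ((2:ℕ)^d : ℕ) = 1 := by
        push_cast
        field_simp
      rw [this, Real.rpow_one]
    have hAnn : 0 ≤ A / c := div_nonneg hSFnn hc0.le
    have : A / c = B / c := by
      rw [← key (A/c) hAnn, ← key (B/c) hBpos.le, heq]
    rw [div_eq_div_iff (ne_of_gt hc0) (ne_of_gt hc0)] at this
    exact mul_right_cancel₀ (ne_of_gt hc0) this
  -- pointwise equality
  have hpteq : ∀ p ∈ (Finset.univ : Finset (ZMod M × (Fin d → ZMod M))),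
      (iterDeriv d p.2 ft p.1).re = (iterDeriv d p.2 g p.1).re := by
    refine (Finset.sum_eq_sum_iff_of_le hle).mp ?_
    rw [← Complex.re_sum, ← Complex.re_sum]
    exact hSeq
  -- the key consequence
  have key : ∀ (x : ZMod M) (h : Fin d → ZMod M),
      iterDeriv d h g x = 1 → iterDeriv d h ft x = 1 := by
    intro x h hone
    have e1 := hpteq (x, h) (Finset.mem_univ _)
    have e2 := (hptd (x, h)).2.2
    simp only at e1 e2
    rw [hone] at e1 e2
    simp at e1 e2
    exact complex_eq_one e1 e2
  -- consequence (A) : |f| = 1 on [N]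
  have habs : ∀ m : ℕ, 1 ≤ m → m ≤ N → ‖f (m:ℤ)‖ = 1 := by
    intro m h1 h2
    have hA : iterDeriv d (fun _ => (0 : ZMod M)) g ((m:ℕ) : ZMod M) = 1 := by
      rw [iterDeriv_zero_dir, hgval m h1 h2, q_iterate_one]
    have hB := key _ _ hA
    rw [iterDeriv_zero_dir, hftval m h1 h2, hd, q_iterate_normSq] at hB
    have hB' : Complex.normSq (f (m:ℤ)) ^ 2 ^ s = 1 := by exact_mod_cast hB
    have hns : Complex.normSq (f (m:ℤ)) = 1 :=
      pow_eq_one_nonneg (Complex.normSq_nonneg _) (pow_pos (by norm_num : (0:ℕ) < 2) s).ne' hB'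
    rw [← Complex.sq_norm] at hns
    exact pow_eq_one_nonneg (norm_nonneg _) two_ne_zero hns
  -- consequence (B) : multiplicative derivative condition
  have hder : ∀ a : ℕ, 1 ≤ a → a + d ≤ N → cdelta^[d] f (a:ℤ) = 1 := by
    intro a h1 h2
    have hA : iterDeriv d (fun _ => (1 : ZMod M)) g ((a:ℕ) : ZMod M) = 1 := by
      rw [iterDeriv_one_transfer M d (fun _ => (1:ℂ)) g a
        (fun m hm hm' => hgval m (by omega) (by omega))]
      exact cdelta_iterate_one d a
    have hB := key _ _ hA
    rw [iterDeriv_one_transfer M d f ft a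
      (fun m hm hm' => hftval m (by omega) (by omega))] at hB
    exact hB
  -- phase function
  set φ : ℤ → ℝ := fun n => (f n).arg / (2 * Real.pi) with hφ
  have hphi : ∀ n : ℤ, 1 ≤ n → n ≤ N → f n = eC (φ n) := by
    intro n h1 h2
    have hn : ((n.toNat : ℕ) : ℤ) = n := Int.toNat_of_nonneg (by omega)
    have := habs n.toNat (by omega) (by omega)
    rw [hn] at this
    exact (eC_arg (f n) this).symm
  -- integrality of iterated differences of φ
  have hrdphi : ∀ a : ℕ, 1 ≤ a → a + d ≤ N → ∃ m : ℤ, rdelta^[d] φ (a:ℤ) = m := by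
    intro a h1 h2
    have ht : cdelta^[d] f (a:ℤ) = eC (rdelta^[d] φ (a:ℤ)) := by
      refine cdelta_eC_transfer d f φ (a:ℤ) ?_
      intro m hm hm'
      refine hphi m (by omega) (by omega)
    rw [hder a h1 h2] at ht
    exact (eC_eq_one_iff _).mp ht.symm
  -- interpolation polynomial
  set r := min d N with hr
  have hr1 : 1 ≤ r := by omega
  have hrd : r ≤ d := min_le_left _ _
  have hrN : r ≤ N := min_le_right _ _
  set P := Lagrange.interpolate (Finset.Icc 1 r) (fun i : ℕ => (i:ℝ))
    (fun i : ℕ => φ (i:ℤ)) with hP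
  have hinj : Set.InjOn (fun i : ℕ => (i:ℝ)) ↑(Finset.Icc 1 r) :=
    fun a _ b _ hab => Nat.cast_injective hab
  have hdeg : P.degree < (r : ℕ) := by
    have := Lagrange.degree_interpolate_lt (fun i : ℕ => φ (i:ℤ)) hinj
    rwa [Nat.card_Icc, Nat.add_sub_cancel] at this
  have hnd : P.natDegree ≤ s := by
    by_cases h0 : P = 0
    · simp [h0]
    · have := (Polynomial.natDegree_lt_iff_degree_lt h0).mpr hdeg
      omega
  have hnode : ∀ i : ℕ, 1 ≤ i → i ≤ r → P.eval ((i:ℕ):ℝ) = φ (i:ℤ) := by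
    intro i hi1 hi2
    exact Lagrange.eval_interpolate_at_node _ hinj (Finset.mem_Icc.mpr ⟨hi1, hi2⟩)
  -- integrality of φ - P on all of [N]
  have hpsi : ∀ m : ℕ, 1 ≤ m → m ≤ N → ∃ z : ℤ, φ (m:ℤ) - P.eval ((m:ℤ):ℝ) = z := by
    intro m
    induction m using Nat.strong_induction_on with
    | _ m IH =>
      intro hm1 hmN
      by_cases hcase : m ≤ r
      · refine ⟨0, ?_⟩
        have hcast : ((m:ℤ):ℝ) = ((m:ℕ):ℝ) := by push_cast; ring
        rw [hcast, hnode m hm1 hcase]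
        simp
      · have hdN : d ≤ N := by
          rcases le_or_gt d N with h | h
          · exact h
          · exfalso
            have : r = N := by omega
            omega
        have hrd2 : r = d := by
          rw [hr]
          exact min_eq_left hdN
        have hwin : ∀ k : ℕ, k < d →
            ∃ z : ℤ, φ ((m:ℤ) - d + (k:ℤ)) - P.eval (((((m:ℤ) - d + (k:ℤ)) : ℤ)):ℝ) = z := by
          intro k hk
          have hk1 : (m:ℤ) - d + (k:ℤ) = ((m - d + k : ℕ) : ℤ) := by omega
          obtain ⟨z, hz⟩ := IH (m - d + k) (by omega) (by omega) (by omega)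
          exact ⟨z, by rw [hk1]; exact hz⟩
        have hdiff : ∃ z : ℤ, rdelta^[d] (fun n : ℤ => φ n - P.eval (n:ℝ)) ((m:ℤ) - d) = z := by
          rw [rdelta_iterate_sub, rdelta_poly d P (by rw [← hrd2]; exact hdeg), sub_zero]
          have hcast : (m:ℤ) - d = ((m - d : ℕ) : ℤ) := by omega
          rw [hcast]
          exact hrdphi (m - d) (by omega) (by omega)
        obtain ⟨mz, hmz⟩ := int_window d (fun n : ℤ => φ n - P.eval (n:ℝ)) ((m:ℤ) - d) hwin hdiff
        refine ⟨mz, ?_⟩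
        have hcast : (m:ℤ) = ((m:ℤ) - d) + (d:ℕ) := by omega
        rw [hcast]
        exact hmz
  -- conclusion
  refine ⟨P, hnd, ?_⟩
  intro n hn
  rw [Finset.mem_Icc] at hn
  have hn1 : 1 ≤ n := hn.1
  have hnN : n ≤ (N:ℤ) := hn.2
  have hm : ((n.toNat : ℕ) : ℤ) = n := Int.toNat_of_nonneg (by omega)
  obtain ⟨z, hz⟩ := hpsi n.toNat (by omega) (by omega)
  rw [hm] at hz
  rw [hphi n hn1 hnN]
  have hsplit : φ n = P.eval ((n:ℤ):ℝ) + (z:ℝ) := by linarith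
  rw [hsplit, eC_add, eC_int, mul_one]
end
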